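/- Let D be an acyclic digraph with a unique vertex of in-degree zero. Then either D has an out-branching with at least k leaves, or the pathwidth of the underlying undirected graph of D is at most 4k. -/

import Mathlib

open Relation

/-- `T` is an out-branching (spanning out-tree) of the digraph `A` rooted at `r`. -/
def IsOutBranching {V : Type*} (A : V → V → Prop) (r : V) (T : V → V → Prop) : Prop :=
  (∀ u v, T u v → A u v) ∧
  (∀ u, ¬ T u r) ∧
  (∀ v, v ≠ r → ∃! u, T u v) ∧
  (∀ v, Relation.ReflTransGen T r v)

/-- Number of leaves (out-degree zero vertices) of a spanning tree relation `T`. -/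
noncomputable def leavesCount {V : Type*} (T : V → V → Prop) : ℕ :=
  {v : V | ∀ u, ¬ T v u}.ncard

/-- `T` is an out-tree of digraph `A` on vertex set `S`, rooted at `r`. -/
def IsOutTree {V : Type*} (A : V → V → Prop) (S : Set V) (r : V) (T : V → V → Prop) : Prop :=
  r ∈ S ∧
  (∀ u v, T u v → A u v ∧ u ∈ S ∧ v ∈ S) ∧
  (∀ u, ¬ T u r) ∧
  (∀ v ∈ S, v ≠ r → ∃! u, T u v) ∧
  (∀ v ∈ S, Relation.ReflTransGen T r v)

/-- Number of leaves of an out-tree with vertex set `S` and arc relation `T`. -/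
noncomputable def treeLeaves {V : Type*} (S : Set V) (T : V → V → Prop) : ℕ :=
  {v : V | v ∈ S ∧ ∀ u, ¬ T v u}.ncard

/-- A rooted (directed) tree on the whole vertex type. -/
def IsRootedTree {V : Type*} (T : V → V → Prop) (r : V) : Prop :=
  (∀ u, ¬ T u r) ∧
  (∀ v, v ≠ r → ∃! u, T u v) ∧
  (∀ v, Relation.ReflTransGen T r v)

/-- Out-degree of a vertex in a digraph/tree relation. -/
noncomputable def outDeg {V : Type*} (T : V → V → Prop) (v : V) : ℕ :=
  {u : V | T v u}.ncard

/-- The underlying undirected simple graph of a digraph. -/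
def UN {V : Type*} (A : V → V → Prop) : SimpleGraph V where
  Adj u v := u ≠ v ∧ (A u v ∨ A v u)
  symm := ⟨fun u v h => ⟨Ne.symm h.1, h.2.symm⟩⟩
  loopless := ⟨fun v h => h.1 rfl⟩

/-- The pathwidth of `G` is at most `w`: there is a path decomposition of width `≤ w`. -/
def pwLE {V : Type*} (G : SimpleGraph V) (w : ℕ) : Prop :=
  ∃ (s : ℕ) (X : Fin s → Finset V),
    (∀ v, ∃ i, v ∈ X i) ∧
    (∀ u v, G.Adj u v → ∃ i, u ∈ X i ∧ v ∈ X i) ∧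
    (∀ i j k : Fin s, i ≤ j → j ≤ k → ∀ v, v ∈ X i → v ∈ X k → v ∈ X j) ∧
    (∀ i, (X i).card ≤ w + 1)

/-- The strong component of the vertex `v` in digraph `A`. -/
def strongComp {V : Type*} (A : V → V → Prop) (v : V) : Set V :=
  {u : V | Relation.ReflTransGen A u v ∧ Relation.ReflTransGen A v u}

/-- Maximum number of leaves over all out-trees of `A` (ℓ(D)). -/
noncomputable def maxLeafOT {V : Type*} (A : V → V → Prop) : ℕ :=
  sSup {l : ℕ | ∃ (S : Set V) (r : V) (T : V → V → Prop), IsOutTree A S r T ∧ treeLeaves S T = l}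

/-- Maximum number of leaves over all out-branchings of `A` (ℓ_s(D)), `0` if none exists. -/
noncomputable def maxLeafOB {V : Type*} (A : V → V → Prop) : ℕ :=
  sSup {l : ℕ | ∃ (r : V) (T : V → V → Prop), IsOutBranching A r T ∧ leavesCount T = l}

/-- `T` is a 1-arc-exchange optimal out-branching of `A` rooted at `r`. -/
def OneAEOptimal {V : Type*} (A : V → V → Prop) (r : V) (T : V → V → Prop) : Prop :=
  IsOutBranching A r T ∧
  ∀ f x : V × V, T f.1 f.2 → A x.1 x.2 → ¬ T x.1 x.2 →
    IsOutBranching A r (fun a b => (T a b ∧ (a, b) ≠ f) ∨ (a, b) = x) →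
    leavesCount (fun a b => (T a b ∧ (a, b) ≠ f) ∨ (a, b) = x) ≤ leavesCount T

/-- Vertex separation of `G` is at most `k`, witnessed by some linear ordering. -/
def vsLE {V : Type*} [Fintype V] (G : SimpleGraph V) (k : ℕ) : Prop :=
  ∃ σ : Fin (Fintype.card V) ≃ V,
    ∀ j : Fin (Fintype.card V),
      {i : Fin (Fintype.card V) | i ≤ j ∧ ∃ i', j < i' ∧ G.Adj (σ i) (σ i')}.ncard ≤ k

/-!
Take an out-branching `T` with the maximum number `ℓ < k` of leaves. Exchanging a tree arc
`(p, v)` for a non-tree arc `(u, v)` gives again an out-branching since `D` is acyclic; when `p`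
has out-degree one and `u` is not a leaf, this gains the leaf `p` and loses none, so by
maximality such a `u` is a leaf. Call `v` a chain vertex if it is not the root and both `v` and
its parent have out-degree one. Counting degrees in `T`, fewer than `4ℓ` vertices are not chain
vertices, and by the exchange argument every arc of `D` between two chain vertices is an arc of
`T`. So the chain vertices induce disjoint paths, and listing them path after path, the bags
made of all non-chain vertices together with two consecutive chain vertices form a path
decomposition of width less than `4k`.
-/

open Finset

section OutBranching

variable {V : Type*} {A T : V → V → Prop} {r p u v : V}

theorem wellFounded_of_acyclic [Finite V] (hacyc : ∀ v, ¬ TransGen A v v) : WellFounded A :=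
  haveI : Std.Irrefl (TransGen A) := ⟨hacyc⟩
  Subrelation.wf (TransGen.single ·) (Finite.wellFounded_of_trans_of_irrefl _)

theorem reflTransGen_of_forall_exists_rel (hwf : WellFounded T) (hpar : ∀ v, v ≠ r → ∃ u, T u v)
    (v : V) : ReflTransGen T r v := by
  induction v using hwf.induction with
  | _ v ih =>
    by_cases hv : v = r
    · exact hv ▸ .refl
    · obtain ⟨u, hu⟩ := hpar v hv
      exact (ih u hu).tail hu

theorem IsOutBranching.of_wellFounded (hwf : WellFounded A) (hTA : ∀ u v, T u v → A u v)
    (hr : ∀ u, ¬ T u r) (hpar : ∀ v, v ≠ r → ∃! u, T u v) : IsOutBranching A r T :=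
  ⟨hTA, hr, hpar, reflTransGen_of_forall_exists_rel (Subrelation.wf (hTA _ _) hwf)
    fun v hv => (hpar v hv).exists⟩

theorem exists_isOutBranching (hwf : WellFounded A) (hin : ∀ v, v ≠ r → ∃ u, A u v) :
    ∃ T, IsOutBranching A r T := by
  choose! par hpar using hin
  refine ⟨fun u v => v ≠ r ∧ u = par v, .of_wellFounded hwf ?_ (fun u h => h.1 rfl)
    fun v hv => ⟨par v, ⟨hv, rfl⟩, fun u h => h.2⟩⟩
  rintro u v ⟨hv, rfl⟩
  exact hpar v hv

theorem exists_isOutBranching_forall_leavesCount_le [Finite V]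
    (h : ∃ r T, IsOutBranching A r T) :
    ∃ r T, IsOutBranching A r T ∧
      ∀ r' T', IsOutBranching A r' T' → leavesCount T' ≤ leavesCount T := by
  obtain ⟨r, T, hT⟩ := h
  obtain ⟨⟨r, T⟩, hT, hmax⟩ :=
    Set.exists_max_image {b : V × (V → V → Prop) | IsOutBranching A b.1 b.2}
      (fun b => leavesCount b.2) (Set.toFinite _) ⟨(r, T), hT⟩
  exact ⟨r, T, hT, fun r' T' hT' => hmax (r', T') hT'⟩

theorem eq_of_outDeg_eq_one {a b : V} (hp : outDeg T p = 1) (ha : T p a) (hb : T p b) :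
    a = b := by
  obtain ⟨c, hc⟩ := Set.ncard_eq_one.mp hp
  have ha' : a ∈ {w | T p w} := ha
  have hb' : b ∈ {w | T p w} := hb
  rw [hc] at ha' hb'
  exact ha'.trans hb'.symm

theorem exists_rel_of_outDeg_eq_one (hp : outDeg T p = 1) : ∃ w, T p w := by
  obtain ⟨c, hc⟩ := Set.ncard_eq_one.mp hp
  exact ⟨c, (hc.symm ▸ rfl : c ∈ {w | T p w})⟩

theorem IsRootedTree.eq_of_rel {a b c : V} (hT : IsRootedTree T r) (ha : T a c) (hb : T b c) :
    a = b :=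
  (hT.2.1 c fun h => hT.1 a (h ▸ ha)).unique ha hb

-- The arc exchange of `OneAEOptimal`.
def exchangeArc (T : V → V → Prop) (f x : V × V) : V → V → Prop :=
  fun a b => (T a b ∧ (a, b) ≠ f) ∨ (a, b) = x

theorem IsOutBranching.exchangeArc (hwf : WellFounded A) (hT : IsOutBranching A r T)
    (hpv : T p v) (huv : A u v) : IsOutBranching A r (exchangeArc T (p, v) (u, v)) := by
  obtain ⟨hTA, hTr, hTpar, -⟩ := hT
  refine .of_wellFounded hwf ?_ ?_ fun x hx => ?_
  · rintro a b (⟨h, -⟩ | h)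
    · exact hTA a b h
    · obtain ⟨rfl, rfl⟩ := Prod.mk.inj h
      exact huv
  · rintro a (⟨h, -⟩ | h)
    · exact hTr a h
    · exact hTr p ((Prod.mk.inj h).2 ▸ hpv)
  · by_cases hxv : x = v
    · subst hxv
      refine ⟨u, Or.inr rfl, ?_⟩
      rintro a (⟨h, hne⟩ | h)
      · exact absurd (by rw [(hTpar x hx).unique h hpv]) hne
      · exact (Prod.mk.inj h).1
    · obtain ⟨q, hq, hq'⟩ := hTpar x hx
      refine ⟨q, Or.inl ⟨hq, by simp [hxv]⟩, ?_⟩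
      rintro a (⟨h, -⟩ | h)
      · exact hq' a h
      · exact absurd (Prod.mk.inj h).2 hxv

-- `p` becomes a leaf, and no leaf is lost because the new tail `u` was not a leaf.
theorem leavesCount_lt_exchangeArc [Finite V] (hpv : T p v) (hp : outDeg T p = 1)
    (huv : ¬ T u v) (hu : ∃ w, T u w) :
    leavesCount T < leavesCount (exchangeArc T (p, v) (u, v)) := by
  have hsub : insert p {x | ∀ z, ¬ T x z} ⊆ {x | ∀ z, ¬ exchangeArc T (p, v) (u, v) x z} := by
    rintro x (rfl | hx) z (⟨h, hne⟩ | h)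
    · exact hne (by rw [eq_of_outDeg_eq_one hp h hpv])
    · obtain ⟨rfl, rfl⟩ := Prod.mk.inj h
      exact huv hpv
    · exact hx z h
    · obtain ⟨rfl, rfl⟩ := Prod.mk.inj h
      obtain ⟨w, hw⟩ := hu
      exact hx w hw
  calc leavesCount T < (insert p {x | ∀ z, ¬ T x z}).ncard := by
        rw [Set.ncard_insert_of_notMem (fun h : p ∈ {x | ∀ z, ¬ T x z} => h v hpv)
          (Set.toFinite _)]
        exact Nat.lt_succ_self _
    _ ≤ _ := Set.ncard_le_ncard hsub (Set.toFinite _)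

theorem OneAEOptimal.of_forall_leavesCount_le (hT : IsOutBranching A r T)
    (hmax : ∀ r' T', IsOutBranching A r' T' → leavesCount T' ≤ leavesCount T) :
    OneAEOptimal A r T :=
  ⟨hT, fun _ _ _ _ _ h => hmax _ _ h⟩

theorem OneAEOptimal.forall_not_rel_of_arc [Finite V] (hwf : WellFounded A)
    (hT : OneAEOptimal A r T) (huv : A u v) (hnuv : ¬ T u v) (hpv : T p v)
    (hp : outDeg T p = 1) : ∀ w, ¬ T u w := fun w huw =>
  (leavesCount_lt_exchangeArc hpv hp hnuv ⟨w, huw⟩).not_ge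
    (hT.2 (p, v) (u, v) hpv huv hnuv (hT.1.exchangeArc hwf hpv huv))

end OutBranching

section RootedTree

variable {V : Type*} [Fintype V] {T : V → V → Prop} [DecidableRel T] {r : V}

theorem outDeg_eq_card_filter (v : V) : outDeg T v = #{u | T v u} := by
  rw [outDeg, Set.ncard_eq_toFinset_card', Set.toFinset_ofPred]

theorem leavesCount_eq_card_filter : leavesCount T = #{v | outDeg T v = 0} := by
  simp only [leavesCount, outDeg_eq_card_filter, card_eq_zero, filter_eq_empty_iff, mem_univ,
    true_implies, Set.ncard_eq_toFinset_card', Set.toFinset_ofPred]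

theorem IsRootedTree.sum_outDeg (hT : IsRootedTree T r) :
    ∑ v, outDeg T v + 1 = Fintype.card V := by
  classical
  have hin : ∀ u, #{v | T v u} = if u ≠ r then 1 else 0 := by
    intro u
    split_ifs with hu
    · obtain ⟨p, hp, hp'⟩ := hT.2.1 u hu
      exact card_eq_one.mpr ⟨p, by ext; simpa using ⟨hp' _, fun h => h ▸ hp⟩⟩
    · simpa [not_not.mp hu] using hT.1
  calc ∑ v, outDeg T v + 1 = ∑ u, #{v | T v u} + 1 := by
        simp only [outDeg_eq_card_filter, card_filter]
        rw [sum_comm]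
    _ = Fintype.card V := by
        rw [sum_congr rfl fun u _ => hin u, sum_boole, filter_ne', card_erase_of_mem (mem_univ r),
          card_univ, Nat.cast_id, Nat.sub_add_cancel (Fintype.card_pos_iff.mpr ⟨r⟩)]

theorem IsRootedTree.sum_outDeg_ne_one (hT : IsRootedTree T r) :
    ∑ v ∈ {v | outDeg T v ≠ 1}, outDeg T v + 1 = #{v | outDeg T v ≠ 1} := by
  have hsplit := sum_filter_add_sum_filter_not univ (fun v => outDeg T v ≠ 1) (outDeg T)
  have hone : ∑ v ∈ {v | ¬ outDeg T v ≠ 1}, outDeg T v = #{v | ¬ outDeg T v ≠ 1} := by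
    rw [card_eq_sum_ones]
    exact sum_congr rfl fun v hv => not_not.mp (mem_filter.mp hv).2
  have hcard := card_filter_add_card_filter_not (s := univ) fun v => outDeg T v ≠ 1
  have := hT.sum_outDeg
  rw [card_univ] at hcard
  omega

-- Each vertex of out-degree `≥ 2` contributes at least `2` to the sum of `sum_outDeg_ne_one`.
theorem IsRootedTree.card_outDeg_ne_one_lt (hT : IsRootedTree T r) :
    #{v | outDeg T v ≠ 1} < 2 * leavesCount T := by
  have hsum := hT.sum_outDeg_ne_one
  set F : Finset V := {v | outDeg T v ≠ 1}
  have hleaves : #{v ∈ F | outDeg T v = 0} ≤ leavesCount T := by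
    rw [leavesCount_eq_card_filter]
    exact card_le_card fun v hv => by
      simp only [F, mem_filter, mem_univ, true_and] at hv ⊢
      exact hv.2
  have h2 : 2 * #F ≤ ∑ v ∈ F, outDeg T v + 2 * #{v ∈ F | outDeg T v = 0} :=
    calc 2 * #F = ∑ v ∈ F, 2 := by rw [sum_const, smul_eq_mul, mul_comm]
      _ ≤ ∑ v ∈ F, (outDeg T v + 2 * if outDeg T v = 0 then 1 else 0) :=
          sum_le_sum fun v hv => by
            have := (mem_filter.mp hv).2
            split_ifs <;> omega
      _ = ∑ v ∈ F, outDeg T v + 2 * #{v ∈ F | outDeg T v = 0} := by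
          rw [sum_add_distrib, ← mul_sum, sum_boole, Nat.cast_id]
  omega

end RootedTree

section Chains

variable {α : Type*} {R : α → α → Prop} {hwf : WellFounded R}

-- `chainPos hwf b = (a, n)`: the maximal backward `R`-chain ending at `b` starts at `a` and
-- has `n` arcs.
open Classical in
noncomputable def chainPos (hwf : WellFounded R) : α → α × ℕ :=
  hwf.fix fun b IH =>
    if h : ∃ a, R a b then ((IH _ h.choose_spec).1, (IH _ h.choose_spec).2 + 1) else (b, 0)

theorem chainPos_of_rel (hinj : ∀ a b c, R a c → R b c → a = b) {a b : α} (h : R a b) :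
    chainPos hwf b = ((chainPos hwf a).1, (chainPos hwf a).2 + 1) := by
  rw [chainPos, hwf.fix_eq, dif_pos ⟨a, h⟩]
  dsimp only
  rw [hinj _ _ _ (Exists.choose_spec (⟨a, h⟩ : ∃ a, R a b)) h]

theorem chainPos_of_forall_not_rel {b : α} (h : ∀ a, ¬ R a b) : chainPos hwf b = (b, 0) := by
  rw [chainPos, hwf.fix_eq, dif_neg (not_exists.mpr h)]

theorem chainPos_eq_of_snd_eq_zero (hinj : ∀ a b c, R a c → R b c → a = b) {b : α}
    (hb : (chainPos hwf b).2 = 0) : chainPos hwf b = (b, 0) := by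
  by_cases h : ∃ a, R a b
  · obtain ⟨a, h⟩ := h
    simp [chainPos_of_rel hinj h] at hb
  · exact chainPos_of_forall_not_rel (not_exists.mp h)

theorem exists_rel_of_chainPos_snd_eq_succ (hinj : ∀ a b c, R a c → R b c → a = b) {b : α}
    {n : ℕ} (hb : (chainPos hwf b).2 = n + 1) :
    ∃ a, R a b ∧ chainPos hwf a = ((chainPos hwf b).1, n) := by
  by_cases h : ∃ a, R a b
  · obtain ⟨a, h⟩ := h
    rw [chainPos_of_rel hinj h] at hb ⊢
    exact ⟨a, h, Prod.ext rfl (Nat.succ_injective hb)⟩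
  · simp [chainPos_of_forall_not_rel (not_exists.mp h)] at hb

theorem chainPos_injective (hinj : ∀ a b c, R a c → R b c → a = b)
    (hfun : ∀ a b c, R a b → R a c → b = c) : Function.Injective (chainPos hwf) := by
  suffices ∀ n a b, (chainPos hwf a).2 = n → chainPos hwf a = chainPos hwf b → a = b from
    fun a b hab => this _ a b rfl hab
  intro n
  induction n with
  | zero =>
    intro a b ha hab
    have hb := chainPos_eq_of_snd_eq_zero hinj (hab ▸ ha)
    rw [chainPos_eq_of_snd_eq_zero hinj ha, hb] at hab
    exact (Prod.mk.inj hab).1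
  | succ n ih =>
    intro a b ha hab
    obtain ⟨a', ha', hpa⟩ := exists_rel_of_chainPos_snd_eq_succ hinj ha
    obtain ⟨b', hb', hpb⟩ := exists_rel_of_chainPos_snd_eq_succ hinj (hab ▸ ha)
    obtain rfl : a' = b' := ih a' b' (by rw [hpa]) (by rw [hpa, hpb, hab])
    exact hfun _ _ _ ha' hb'

-- Chains are ordered by their first vertex and then by position, so that each arc becomes a
-- covering pair.
theorem exists_equivFin_consecutive_of_rel [Fintype α] (hwf : WellFounded R)
    (hinj : ∀ a b c, R a c → R b c → a = b) (hfun : ∀ a b c, R a b → R a c → b = c) :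
    ∃ σ : Fin (Fintype.card α) ≃ α, ∀ i j, R (σ i) (σ j) → (i : ℕ) + 1 = j := by
  let e := Fintype.equivFin α
  let key : α → ℕ ×ₗ ℕ := fun a => toLex ((e (chainPos hwf a).1 : ℕ), (chainPos hwf a).2)
  have hkey : Function.Injective key := fun a b h => by
    have h' := Prod.mk.inj (toLex.injective h)
    exact chainPos_injective hinj hfun (Prod.ext (e.injective (Fin.val_injective h'.1)) h'.2)
  let _ : LinearOrder α := LinearOrder.lift' key hkey
  let σ := monoEquivOfFin α rfl
  refine ⟨σ.toEquiv, fun i j (h : R (σ i) (σ j)) => ?_⟩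
  have hcov : σ i ⋖ σ j := by
    refine CovBy.of_image (OrderEmbedding.ofStrictMono key fun _ _ h => h) ?_
    change key (σ i) ⋖ key (σ j)
    simp only [key, chainPos_of_rel hinj h]
    exact Prod.Lex.toLex_covBy_toLex_iff.mpr (Or.inl ⟨rfl, Order.covBy_add_one _⟩)
  exact Nat.covBy_iff_add_one_eq.mp (Fin.covBy_iff.mp ((apply_covBy_apply_iff σ).mp hcov))

end Chains

section PathDecomposition

variable {V : Type*} {G : SimpleGraph V}

theorem pwLE.mono {w w' : ℕ} (h : pwLE G w) (hw : w ≤ w') : pwLE G w' :=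
  let ⟨s, X, hcov, hadj, hint, hcard⟩ := h
  ⟨s, X, hcov, hadj, hint, fun i => (hcard i).trans (by omega)⟩

theorem card_filter_val_eq_or_succ_eq_le_two (t m : ℕ) :
    #{j : Fin t | (j : ℕ) = m ∨ (j : ℕ) + 1 = m} ≤ 2 := by
  refine (card_le_card_of_injOn Fin.val (t := {m, m - 1}) (fun j hj => ?_)
    Fin.val_injective.injOn).trans card_le_two
  simp only [coe_filter, mem_univ, true_and, Set.mem_ofPred_eq] at hj
  simp only [coe_insert, coe_singleton, Set.mem_insert_iff, Set.mem_singleton_iff]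
  omega

-- Bag `m` is `S` together with `σ (m - 1)` and `σ m`.
theorem pwLE_of_adj_consecutive {t : ℕ} (S : Finset V) (σ : Fin t → V)
    (hσ : Function.Injective σ) (hcover : ∀ v ∉ S, ∃ i, σ i = v)
    (hadj : ∀ i j, G.Adj (σ i) (σ j) → σ i ∉ S → σ j ∉ S → (i : ℕ) + 1 = j ∨ (j : ℕ) + 1 = i) :
    pwLE G (#S + 1) := by
  classical
  let near (m : Fin (t + 1)) (j : Fin t) : Prop := (j : ℕ) = m ∨ (j : ℕ) + 1 = m
  let X (m : Fin (t + 1)) : Finset V := S ∪ (univ.filter (near m)).image σ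
  have hmem : ∀ m v, v ∈ X m ↔ v ∈ S ∨ ∃ j, near m j ∧ σ j = v := by
    simp [X]
  have hbag : ∀ j : Fin t, σ j ∈ X j.castSucc := fun j =>
    (hmem j.castSucc (σ j)).mpr (.inr ⟨j, .inl rfl, rfl⟩)
  refine ⟨t + 1, X, fun v => ?_, fun u v huv => ?_, fun i j l hij hjl v hi hl => ?_, fun m => ?_⟩
  · by_cases hv : v ∈ S
    · exact ⟨0, (hmem _ _).mpr (Or.inl hv)⟩
    · obtain ⟨i, rfl⟩ := hcover v hv
      exact ⟨_, hbag i⟩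
  · by_cases hu : u ∈ S <;> by_cases hv : v ∈ S
    · exact ⟨0, (hmem _ _).mpr (.inl hu), (hmem _ _).mpr (.inl hv)⟩
    · obtain ⟨j, rfl⟩ := hcover v hv
      exact ⟨_, (hmem _ _).mpr (.inl hu), hbag j⟩
    · obtain ⟨i, rfl⟩ := hcover u hu
      exact ⟨_, hbag i, (hmem _ _).mpr (.inl hv)⟩
    · obtain ⟨i, rfl⟩ := hcover u hu
      obtain ⟨j, rfl⟩ := hcover v hv
      rcases hadj i j huv hu hv with h | h
      · exact ⟨j.castSucc, (hmem _ _).mpr (.inr ⟨i, .inr h, rfl⟩), hbag j⟩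
      · exact ⟨i.castSucc, hbag i, (hmem _ _).mpr (.inr ⟨j, .inr h, rfl⟩)⟩
  · rw [hmem] at hi hl ⊢
    rcases hi with hS | ⟨a, ha, rfl⟩
    · exact .inl hS
    rcases hl with hS | ⟨b, hb, hab⟩
    · exact .inl hS
    rw [hσ hab] at hb
    rw [Fin.le_def] at hij hjl
    exact .inr ⟨a, by simp only [near] at ha hb ⊢; omega, rfl⟩
  · have hnear : #(univ.filter (near m)) ≤ 2 := card_filter_val_eq_or_succ_eq_le_two t m
    calc #(X m) ≤ #S + #((univ.filter (near m)).image σ) := card_union_le _ _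
      _ ≤ #S + 1 + 1 := by have := card_image_le (s := univ.filter (near m)) (f := σ); omega

end PathDecomposition

section Assembly

variable {V : Type*} [Fintype V] {A T : V → V → Prop} {r : V}

def IsChainVertex (T : V → V → Prop) (r v : V) : Prop :=
  v ≠ r ∧ outDeg T v = 1 ∧ ∀ p, T p v → outDeg T p = 1

open Classical in
theorem IsRootedTree.card_not_isChainVertex_lt (hT : IsRootedTree T r) :
    #{v | ¬ IsChainVertex T r v} < 4 * leavesCount T := by
  have hsum := hT.sum_outDeg_ne_one
  have hlt := hT.card_outDeg_ne_one_lt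
  set F : Finset V := {v | outDeg T v ≠ 1}
  set C : Finset V := F.biUnion fun p => {u | T p u}
  have hsub : ({v | ¬ IsChainVertex T r v} : Finset V) ⊆ insert r (F ∪ C) := by
    intro v hv
    simp only [IsChainVertex, mem_filter, mem_univ, true_and, not_and_or, not_forall] at hv
    simp only [F, C, mem_insert, mem_union, mem_biUnion, mem_filter, mem_univ, true_and]
    tauto
  have hC : #C ≤ ∑ p ∈ F, outDeg T p :=
    card_biUnion_le.trans (sum_congr rfl fun p _ => outDeg_eq_card_filter p).ge
  calc #{v | ¬ IsChainVertex T r v} ≤ #(insert r (F ∪ C)) := card_le_card hsub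
    _ ≤ #F + #C + 1 := (card_insert_le _ _).trans (Nat.add_le_add_right (card_union_le _ _) 1)
    _ < 4 * leavesCount T := by omega

theorem OneAEOptimal.pwLE_UN (hacyc : ∀ v, ¬ TransGen A v v) (hT : OneAEOptimal A r T) {k : ℕ}
    (hk : leavesCount T < k) : pwLE (UN A) (4 * k) := by
  classical
  have hwf := wellFounded_of_acyclic hacyc
  have htree : IsRootedTree T r := hT.1.2
  have hcard := htree.card_not_isChainVertex_lt
  set S : Finset V := {v | ¬ IsChainVertex T r v}
  have hchain : ∀ v ∉ S, IsChainVertex T r v := fun v hv => by simpa [S] using hv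
  have hA : ∀ u v, u ∉ S → v ∉ S → A u v → T u v := fun u v hu hv huv => by
    by_contra hnot
    obtain ⟨hvr, -, hpar⟩ := hchain v hv
    obtain ⟨p, hp, -⟩ := htree.2.1 v hvr
    obtain ⟨w, hw⟩ := exists_rel_of_outDeg_eq_one (hchain u hu).2.1
    exact hT.forall_not_rel_of_arc hwf huv hnot hp (hpar p hp) w hw
  obtain ⟨σ, hσ⟩ := exists_equivFin_consecutive_of_rel (R := fun a b : {v // v ∉ S} => T a b)
    (InvImage.wf Subtype.val (Subrelation.wf (hT.1.1 _ _) hwf))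
    (fun a b c ha hb => Subtype.ext (htree.eq_of_rel ha hb))
    (fun a b c hb hc => Subtype.ext (eq_of_outDeg_eq_one (hchain a a.2).2.1 hb hc))
  refine (pwLE_of_adj_consecutive S (fun i => (σ i).1) (Subtype.val_injective.comp σ.injective)
    (fun v hv => ⟨σ.symm ⟨v, hv⟩, by simp⟩) ?_).mono ?_
  · rintro i j ⟨-, h | h⟩ hi hj
    · exact .inl (hσ i j (hA _ _ hi hj h))
    · exact .inr (hσ j i (hA _ _ hj hi h))
  · omega

end Assembly

/-- An acyclic digraph with a unique in-degree-zero vertex either has an out-branching with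
at least `k` leaves, or the pathwidth of its underlying graph is at most `4k`. -/
theorem stmt_10 {V : Type*} [Fintype V] (A : V → V → Prop) (k : ℕ)
    (hacyc : ∀ v : V, ¬ Relation.TransGen A v v)
    (hroot : ∃! v : V, ∀ u : V, ¬ A u v) :
    (∃ (r : V) (T : V → V → Prop), IsOutBranching A r T ∧ k ≤ leavesCount T) ∨
      pwLE (UN A) (4 * k) := by
  refine or_iff_not_imp_left.mpr fun hk => ?_
  simp only [not_exists, not_and, not_le] at hk
  have hwf := wellFounded_of_acyclic hacyc
  obtain ⟨r, -, hr⟩ := hroot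
  obtain ⟨T₀, hT₀⟩ := exists_isOutBranching hwf fun v hv => by
    by_contra! h
    exact hv (hr v h)
  obtain ⟨ρ, T, hT, hmax⟩ := exists_isOutBranching_forall_leavesCount_le ⟨r, T₀, hT₀⟩
  exact (OneAEOptimal.of_forall_leavesCount_le hT hmax).pwLE_UN hacyc (hk ρ T hT)
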